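/- Let α be a peak composition of n. The set RW_c(α) := {w_c(T) : T ∈ SPIT(α)} ⊆ S_n is a left weak Bruhat interval (i.e. RW_c(α) = [σ,ρ]_L for some σ ⪯_L ρ in S_n) if and only if the number of parts of α greater than 2 is at most 1. -/

import Mathlib

/-!
A standard filling is a SPIT iff its rows increase and `T (2, j) < T (1, j + 1)` for every row
`j` below the top one; then the entries increase along the first two columns read row by row.
An inversion of `wC α T` is a pair of boxes `p` read before `q` with `T q < T p`, so inclusions
of inversion sets compare fillings box by box.

Numbering the first two columns row by row and then the remaining boxes in reading order gives
the SPIT with the fewest inversions, and lying above it forces the conditions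
`T (2, j) < T (1, j + 1)`. If only row `R` reaches column 3, numbering its boxes beyond column 2
right after `(2, R)` gives the SPIT with the most inversions, and lying below it forces the rows
to increase. If rows `r < r'` both reach column 3, a common upper bound in `RWc α` of the two
fillings obtained by inserting row `r`, resp. `r'`, would satisfy
`T (3, r) < T (1, r + 1) < T (2, r') < T (3, r') < T (3, r)`.
-/

namespace PaperSPIT

/-- The `j`-th part (1-indexed) of a composition presented as a list. -/
def part (α : List ℕ) (j : ℕ) : ℕ := α.getD (j - 1) 0

/-- The largest part. -/
def maxPart (α : List ℕ) : ℕ := α.foldr max 0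

/-- The composition diagram: boxes `(i, j)` (column `i`, row `j`), both 1-indexed,
rows numbered from bottom to top. -/
def cd (α : List ℕ) : Finset (ℕ × ℕ) :=
  (Finset.Icc 1 (maxPart α) ×ˢ Finset.Icc 1 α.length).filter fun p => p.1 ≤ part α p.2

/-- `α` is a composition of `n`. -/
def IsComposition (n : ℕ) (α : List ℕ) : Prop :=
  (∀ a ∈ α, 0 < a) ∧ α.sum = n

/-- `α` is a peak composition of `n`: all parts except possibly the last are `> 1`. -/
def IsPeakComposition (n : ℕ) (α : List ℕ) : Prop :=
  IsComposition n α ∧ ∀ i, i + 1 < α.length → 1 < α.getD i 0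

/-- A standard filling of `cd α`: a bijection from the boxes onto `{1, …, n}`
(normalized to be `0` off the diagram). -/
def IsStandardFilling (α : List ℕ) (T : ℕ × ℕ → ℕ) : Prop :=
  Set.BijOn T (cd α : Set (ℕ × ℕ)) (Set.Icc 1 α.sum) ∧
  ∀ p : ℕ × ℕ, p ∉ cd α → T p = 0

def RowsIncrease (α : List ℕ) (T : ℕ × ℕ → ℕ) : Prop :=
  ∀ i j : ℕ, (i, j) ∈ cd α → (i + 1, j) ∈ cd α → T (i, j) < T (i + 1, j)

def RowsWeaklyIncrease (α : List ℕ) (T : ℕ × ℕ → ℕ) : Prop :=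
  ∀ i j : ℕ, (i, j) ∈ cd α → (i + 1, j) ∈ cd α → T (i, j) ≤ T (i + 1, j)

def FirstColIncreases (α : List ℕ) (T : ℕ × ℕ → ℕ) : Prop :=
  ∀ j : ℕ, (1, j) ∈ cd α → (1, j + 1) ∈ cd α → T (1, j) < T (1, j + 1)

/-- Standard immaculate tableau. -/
def IsSIT (α : List ℕ) (T : ℕ × ℕ → ℕ) : Prop :=
  IsStandardFilling α T ∧ RowsIncrease α T ∧ FirstColIncreases α T

/-- Peak-tableau condition: for every `1 ≤ k ≤ n` the boxes with entries `≤ k`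
form the diagram of a peak composition. -/
def PeakCond (α : List ℕ) (T : ℕ × ℕ → ℕ) : Prop :=
  ∀ k : ℕ, 1 ≤ k → k ≤ α.sum → ∃ β : List ℕ,
    IsPeakComposition k β ∧ (cd α).filter (fun p => T p ≤ k) = cd β

/-- Standard peak immaculate tableau. -/
def IsSPIT (α : List ℕ) (T : ℕ × ℕ → ℕ) : Prop := IsSIT α T ∧ PeakCond α T

def SPITset (α : List ℕ) : Set (ℕ × ℕ → ℕ) := {T | IsSPIT α T}

/-- The Young triple condition. -/
def YoungTriple (α : List ℕ) (T : ℕ × ℕ → ℕ) : Prop :=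
  ∀ k i j : ℕ, i < j → (k, j) ∈ cd α → (k + 1, i) ∈ cd α → T (k, j) ≤ T (k + 1, i) →
    (k + 1, j) ∈ cd α ∧ T (k + 1, j) < T (k + 1, i)

/-- Standard Young composition tableau. -/
def IsSYCT (α : List ℕ) (T : ℕ × ℕ → ℕ) : Prop :=
  IsStandardFilling α T ∧ RowsIncrease α T ∧ FirstColIncreases α T ∧ YoungTriple α T

def SYCTset (α : List ℕ) : Set (ℕ × ℕ → ℕ) := {T | IsSYCT α T}

/-- Standard peak Young composition tableau. -/
def IsSPYCT (α : List ℕ) (T : ℕ × ℕ → ℕ) : Prop := IsSYCT α T ∧ PeakCond α T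

def SPYCTset (α : List ℕ) : Set (ℕ × ℕ → ℕ) := {T | IsSPYCT α T}

/-- Row reading word `w_r`: rows from top to bottom, each row left to right. -/
def wR (α : List ℕ) (T : ℕ × ℕ → ℕ) : List ℕ :=
  ((List.range α.length).reverse.map fun j =>
    (List.range (part α (j + 1))).map fun i => T (i + 1, j + 1)).flatten

/-- The `i`-th column of a filling, read bottom to top. -/
def colList (α : List ℕ) (T : ℕ × ℕ → ℕ) (i : ℕ) : List ℕ :=
  ((List.range α.length).filter fun j => decide (i ≤ part α (j + 1))).map
    fun j => T (i, j + 1)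

/-- Column reading word `w_c`: columns left to right, each column bottom to top. -/
def wC (α : List ℕ) (T : ℕ × ℕ → ℕ) : List ℕ :=
  ((List.range (maxPart α)).map fun i => colList α T (i + 1)).flatten

/-- Young reading word `w_Y`: first column top to bottom, then subsequent columns
bottom to top, columns left to right. -/
def wY (α : List ℕ) (T : ℕ × ℕ → ℕ) : List ℕ :=
  (colList α T 1).reverse ++
    ((List.range (maxPart α - 1)).map fun i => colList α T (i + 2)).flatten

/-- Descent set of a word with distinct letters: `i` such that `i` and `i+1` occur
and `i` occurs to the right of `i+1`. -/
def DesWord (w : List ℕ) : Finset ℕ :=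
  w.toFinset.filter fun i => (i + 1) ∈ w ∧ w.idxOf (i + 1) < w.idxOf i


/-- A word of length `n` with distinct letters `1,…,n`, identified with an element of `S_n`
in one-line notation. -/
def IsPermWord (n : ℕ) (w : List ℕ) : Prop := w.Perm (List.range' 1 n)

/-- Inversions of a word (1-indexed positions): pairs `(i,j)` with `i < j` and the letter at
position `i` larger than the letter at position `j`. -/
def InvW (w : List ℕ) : Set (ℕ × ℕ) :=
  {q | 1 ≤ q.1 ∧ q.1 < q.2 ∧ q.2 ≤ w.length ∧ w.getD (q.2 - 1) 0 < w.getD (q.1 - 1) 0}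

/-- The set of column reading words of SPITs of shape `α`. -/
def RWc (α : List ℕ) : Set (List ℕ) := {w | ∃ T ∈ SPITset α, w = wC α T}

/-- The set of row reading words of SPITs of shape `α`. -/
def RWr (α : List ℕ) : Set (List ℕ) := {w | ∃ T ∈ SPITset α, w = wR α T}

open Finset

section Diagram

lemma le_maxPart_of_mem {α : List ℕ} {a : ℕ} (h : a ∈ α) : a ≤ maxPart α := by
  induction α with
  | nil => simp at h
  | cons x l ih =>
    rcases List.mem_cons.mp h with rfl | h
    · exact le_max_left _ _
    · exact (ih h).trans (le_max_right _ _)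

lemma part_succ {α : List ℕ} {i : ℕ} (hi : i < α.length) : part α (i + 1) = α[i] := by
  simp [part, hi]

lemma part_le_maxPart {α : List ℕ} {j : ℕ} (h1 : 1 ≤ j) (h2 : j ≤ α.length) :
    part α j ≤ maxPart α := by
  obtain ⟨i, rfl⟩ : ∃ i, j = i + 1 := ⟨j - 1, by omega⟩
  rw [part_succ (by omega)]
  exact le_maxPart_of_mem (List.getElem_mem _)

lemma mem_cd {α : List ℕ} {p : ℕ × ℕ} :
    p ∈ cd α ↔ 1 ≤ p.1 ∧ 1 ≤ p.2 ∧ p.2 ≤ α.length ∧ p.1 ≤ part α p.2 := by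
  simp only [cd, mem_filter, mem_product, mem_Icc]
  constructor
  · rintro ⟨⟨⟨h1, -⟩, h3, h4⟩, h5⟩
    exact ⟨h1, h3, h4, h5⟩
  · rintro ⟨h1, h3, h4, h5⟩
    exact ⟨⟨⟨h1, h5.trans (part_le_maxPart h3 h4)⟩, h3, h4⟩, h5⟩

lemma mk_mem_cd {α : List ℕ} {i j : ℕ} :
    (i, j) ∈ cd α ↔ 1 ≤ i ∧ 1 ≤ j ∧ j ≤ α.length ∧ i ≤ part α j :=
  mem_cd

lemma mk_mem_cd_map_range {c : ℕ → ℕ} {m i j : ℕ} :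
    (i, j) ∈ cd ((List.range m).map fun j => c (j + 1)) ↔
      1 ≤ i ∧ 1 ≤ j ∧ j ≤ m ∧ i ≤ c j := by
  rw [mk_mem_cd, List.length_map, List.length_range]
  refine and_congr_right fun _ => and_congr_right fun hj => and_congr_right fun hjm => ?_
  obtain ⟨j, rfl⟩ : ∃ j', j = j' + 1 := ⟨j - 1, by omega⟩
  rw [part_succ (by simpa using hjm), List.getElem_map, List.getElem_range]

lemma sum_part (α : List ℕ) : ∑ j ∈ Icc 1 α.length, part α j = α.sum := by
  rw [← Ico_add_one_right_eq_Icc, sum_Ico_eq_sum_range, Nat.add_sub_cancel, sum_range,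
    ← Fin.sum_univ_getElem]
  exact sum_congr rfl fun i _ => by rw [Nat.add_comm, part_succ i.2]

lemma card_cd (α : List ℕ) : #(cd α) = α.sum := by
  rw [cd, card_filter, sum_product_right, ← sum_part]
  refine sum_congr rfl fun j hj => ?_
  rw [← card_filter, show {i ∈ Icc 1 (maxPart α) | i ≤ part α j} = Icc 1 (part α j) from ?_,
    Nat.card_Icc, Nat.add_sub_cancel]
  have := part_le_maxPart (mem_Icc.mp hj).1 (mem_Icc.mp hj).2
  ext i
  simp only [mem_filter, mem_Icc]
  omega

lemma countP_le_one_iff {β : Type*} {l : List β} {P : β → Bool} :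
    l.countP P ≤ 1 ↔
      ∀ i j (hi : i < l.length) (hj : j < l.length), P l[i] → P l[j] → i = j := by
  induction l with
  | nil => simp
  | cons x l ih =>
    rw [List.countP_cons]
    by_cases hx : P x
    · rw [if_pos hx, add_le_iff_nonpos_left, nonpos_iff_eq_zero, List.countP_eq_zero]
      constructor
      · intro h i j hi hj hPi hPj
        rcases i with _ | i <;> rcases j with _ | j
        · rfl
        · exact absurd hPj (h _ (List.getElem_mem _))
        · exact absurd hPi (h _ (List.getElem_mem _))
        · exact absurd hPi (h _ (List.getElem_mem _))
      · intro h a ha hPa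
        obtain ⟨j, hj, rfl⟩ := List.getElem_of_mem ha
        exact absurd (h 0 (j + 1) (by simp) (by simpa using hj) hx hPa) (by omega)
    · rw [if_neg hx, Nat.add_zero, ih]
      constructor
      · intro h i j hi hj hPi hPj
        rcases i with _ | i <;> rcases j with _ | j
        · rfl
        · exact absurd hPi hx
        · exact absurd hPj hx
        · exact congrArg (· + 1) (h i j _ _ hPi hPj)
      · intro h i j hi hj hPi hPj
        exact Nat.succ_injective (h (i + 1) (j + 1) (by simpa using hi) (by simpa using hj) hPi hPj)

lemma countP_two_lt_le_one_iff {α : List ℕ} :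
    α.countP (fun a => decide (2 < a)) ≤ 1 ↔ ∀ j j', (3, j) ∈ cd α → (3, j') ∈ cd α → j = j' := by
  rw [countP_le_one_iff]
  constructor
  · intro h j j' hj hj'
    obtain ⟨i, rfl⟩ : ∃ i, j = i + 1 := ⟨j - 1, by have := mk_mem_cd.mp hj; omega⟩
    obtain ⟨i', rfl⟩ : ∃ i', j' = i' + 1 := ⟨j' - 1, by have := mk_mem_cd.mp hj'; omega⟩
    have h1 := mk_mem_cd.mp hj
    have h2 := mk_mem_cd.mp hj'
    rw [part_succ (by omega)] at h1 h2
    refine congrArg (· + 1) (h i i' (by omega) (by omega) ?_ ?_) <;>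
      simp only [decide_eq_true_eq] <;> omega
  · intro h i i' hi hi' hPi hPi'
    have := h (i + 1) (i' + 1) (mk_mem_cd.mpr ⟨by omega, by omega, by omega, ?_⟩)
      (mk_mem_cd.mpr ⟨by omega, by omega, by omega, ?_⟩)
    · omega
    · rw [part_succ hi]
      simp only [decide_eq_true_eq] at hPi
      omega
    · rw [part_succ hi']
      simp only [decide_eq_true_eq] at hPi'
      omega

end Diagram

section ReadingOrder

def colBoxes (α : List ℕ) (i : ℕ) : List (ℕ × ℕ) :=
  ((List.range α.length).filter fun j => decide (i ≤ part α (j + 1))).map fun j => (i, j + 1)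

def readingBoxes (α : List ℕ) : List (ℕ × ℕ) :=
  ((List.range (maxPart α)).map fun i => colBoxes α (i + 1)).flatten

lemma wC_eq_map (α : List ℕ) (T : ℕ × ℕ → ℕ) : wC α T = (readingBoxes α).map T := by
  simp [wC, readingBoxes, colList, colBoxes, List.map_flatten, Function.comp_def]

lemma mem_colBoxes {α : List ℕ} {i : ℕ} {p : ℕ × ℕ} :
    p ∈ colBoxes α i ↔ p.1 = i ∧ 1 ≤ p.2 ∧ p.2 ≤ α.length ∧ i ≤ part α p.2 := by
  obtain ⟨a, b⟩ := p
  simp only [colBoxes, List.mem_map, List.mem_filter, List.mem_range, decide_eq_true_eq,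
    Prod.mk.injEq]
  constructor
  · rintro ⟨j, ⟨hj, hle⟩, rfl, rfl⟩
    exact ⟨rfl, by omega, by omega, hle⟩
  · rintro ⟨rfl, hb1, hb2, hle⟩
    exact ⟨b - 1, ⟨by omega, by rwa [Nat.sub_add_cancel hb1]⟩, rfl, by omega⟩

lemma mem_readingBoxes {α : List ℕ} {p : ℕ × ℕ} : p ∈ readingBoxes α ↔ p ∈ cd α := by
  simp only [readingBoxes, List.mem_flatten, List.mem_map, List.mem_range, mem_cd]
  constructor
  · rintro ⟨_, ⟨i, hi, rfl⟩, hp⟩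
    obtain ⟨h1, h⟩ := mem_colBoxes.mp hp
    exact ⟨by omega, h.1, h.2.1, h1 ▸ h.2.2⟩
  · rintro ⟨h1, h2, h3, h4⟩
    have := part_le_maxPart h2 h3
    exact ⟨_, ⟨p.1 - 1, by omega, rfl⟩,
      mem_colBoxes.mpr ⟨by omega, h2, h3, by rwa [Nat.sub_add_cancel h1]⟩⟩

lemma readingBoxes_sorted (α : List ℕ) :
    (readingBoxes α).Pairwise fun p q => toLex p < toLex q := by
  simp only [readingBoxes, List.pairwise_flatten, List.pairwise_map, List.mem_map]
  refine ⟨?_, List.pairwise_lt_range.imp fun hij p hp q hq => ?_⟩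
  · rintro _ ⟨i, -, rfl⟩
    exact (List.pairwise_lt_range.filter _).map _ fun j k hjk =>
      Prod.Lex.toLex_lt_toLex.mpr (Or.inr ⟨rfl, by omega⟩)
  · rw [mem_colBoxes] at hp hq
    exact Prod.Lex.toLex_lt_toLex.mpr (Or.inl (by omega))

lemma readingBoxes_nodup (α : List ℕ) : (readingBoxes α).Nodup :=
  (readingBoxes_sorted α).imp fun h he => h.ne (congrArg toLex he)

lemma length_readingBoxes (α : List ℕ) : (readingBoxes α).length = α.sum := by
  rw [← card_cd, ← List.toFinset_card_of_nodup (readingBoxes_nodup α)]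
  congr 1
  ext p
  rw [List.mem_toFinset, mem_readingBoxes]

end ReadingOrder

section Inversions

lemma invW_map_subset_iff {ι : Type*} (L : List ι) (f g : ι → ℕ) :
    InvW (L.map f) ⊆ InvW (L.map g) ↔
      ∀ k l (hkl : k < l) (hl : l < L.length), f L[l] < f L[k] → g L[l] < g L[k] := by
  constructor
  · intro h k l hkl hl hf
    have hk := hkl.trans hl
    have := @h (k + 1, l + 1) ⟨by omega, by omega, by simpa using hl, by simpa [hk, hl]⟩
    simpa [hk, hl] using this.2.2.2
  · rintro h ⟨a, b⟩ ⟨ha, hab, hb, hf⟩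
    simp only [List.length_map] at hb hf ⊢
    refine ⟨ha, hab, by simpa using hb, ?_⟩
    have := h (a - 1) (b - 1) (by omega) (by omega)
    simp_all [show a - 1 < L.length by omega, show b - 1 < L.length by omega]

lemma invW_wC_subset_iff {α : List ℕ} {T T' : ℕ × ℕ → ℕ} :
    InvW (wC α T) ⊆ InvW (wC α T') ↔
      ∀ p ∈ cd α, ∀ q ∈ cd α, toLex p < toLex q → T q < T p → T' q < T' p := by
  rw [wC_eq_map, wC_eq_map, invW_map_subset_iff]
  have hs := List.pairwise_iff_getElem.mp (readingBoxes_sorted α)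
  constructor
  · intro h p hp q hq hpq
    obtain ⟨k, hk, rfl⟩ := List.getElem_of_mem (mem_readingBoxes.mpr hp)
    obtain ⟨l, hl, rfl⟩ := List.getElem_of_mem (mem_readingBoxes.mpr hq)
    refine h k l ?_ hl
    by_contra! hlk
    rcases hlk.eq_or_lt with rfl | hlk
    · exact lt_irrefl _ hpq
    · exact lt_asymm hpq (hs l k hl hk hlk)
  · intro h k l hkl hl
    exact h _ (mem_readingBoxes.mp (List.getElem_mem _)) _
      (mem_readingBoxes.mp (List.getElem_mem _)) (hs k l _ hl hkl)

end Inversions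

section StandardFillings

lemma mem_wC {α : List ℕ} {T : ℕ × ℕ → ℕ} {x : ℕ} : x ∈ wC α T ↔ ∃ p ∈ cd α, T p = x := by
  simp [wC_eq_map, mem_readingBoxes]

lemma mem_range'_one {n x : ℕ} : x ∈ List.range' 1 n ↔ x ∈ Set.Icc 1 n := by
  rw [List.mem_range'_1, Set.mem_Icc]
  omega

lemma IsPermWord.mem_iff {n : ℕ} {w : List ℕ} (hw : IsPermWord n w) {x : ℕ} :
    x ∈ w ↔ x ∈ Set.Icc 1 n :=
  (List.Perm.mem_iff hw).trans mem_range'_one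

lemma IsPermWord.length_eq {n : ℕ} {w : List ℕ} (hw : IsPermWord n w) : w.length = n :=
  (List.Perm.length_eq hw).trans List.length_range'

lemma isStandardFilling_iff_isPermWord {α : List ℕ} {T : ℕ × ℕ → ℕ}
    (hT : ∀ p ∉ cd α, T p = 0) : IsStandardFilling α T ↔ IsPermWord α.sum (wC α T) := by
  constructor
  · rintro ⟨hbij, -⟩
    have hnodup : (wC α T).Nodup := by
      rw [wC_eq_map]
      exact (readingBoxes_nodup α).map_on fun p hp q hq =>
        hbij.injOn (mem_readingBoxes.mp hp) (mem_readingBoxes.mp hq)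
    refine List.perm_of_nodup_nodup_toFinset_eq hnodup List.nodup_range' ?_
    ext x
    rw [List.mem_toFinset, List.mem_toFinset, mem_wC, mem_range'_one, ← hbij.image_eq]
    simp only [Set.mem_image, mem_coe]
  · intro hw
    have hnodup : ((readingBoxes α).map T).Nodup := by
      rw [← wC_eq_map]
      exact hw.nodup_iff.mpr List.nodup_range'
    refine ⟨⟨fun p hp => ?_, fun p hp q hq => ?_, fun y hy => ?_⟩, hT⟩
    · exact hw.mem_iff.mp (mem_wC.mpr ⟨p, hp, rfl⟩)
    · exact List.inj_on_of_nodup_map hnodup (mem_readingBoxes.mpr hp) (mem_readingBoxes.mpr hq)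
    · exact mem_wC.mp (hw.mem_iff.mpr hy)

def ofWord (α w : List ℕ) (p : ℕ × ℕ) : ℕ :=
  if p ∈ cd α then w.getD ((readingBoxes α).idxOf p) 0 else 0

lemma wC_ofWord {α w : List ℕ} (hw : w.length = α.sum) : wC α (ofWord α w) = w := by
  rw [wC_eq_map]
  refine List.ext_getElem (by rw [List.length_map, length_readingBoxes, hw]) fun k hk hk' => ?_
  rw [List.length_map] at hk
  rw [List.getElem_map, ofWord, if_pos (mem_readingBoxes.mp (List.getElem_mem hk)),
    (readingBoxes_nodup α).idxOf_getElem k hk, List.getD_eq_getElem _ _ hk']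

lemma isStandardFilling_ofWord {α w : List ℕ} (hw : IsPermWord α.sum w) :
    IsStandardFilling α (ofWord α w) :=
  (isStandardFilling_iff_isPermWord fun p hp => by simp [ofWord, hp]).mpr
    (by rwa [wC_ofWord hw.length_eq])

lemma card_filter_le_of_isStandardFilling {α : List ℕ} {T : ℕ × ℕ → ℕ}
    (hT : IsStandardFilling α T) {k : ℕ} (hk : k ≤ α.sum) : #{p ∈ cd α | T p ≤ k} = k := by
  have hbij := hT.1
  refine (card_nbij T (t := Icc 1 k) (fun p hp => ?_) (fun p hp q hq => ?_) (fun y hy => ?_)).trans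
    (by simp)
  · rw [mem_coe, mem_filter] at hp
    exact mem_Icc.mpr ⟨(hbij.mapsTo hp.1).1, hp.2⟩
  · exact hbij.injOn (mem_filter.mp hp).1 (mem_filter.mp hq).1
  · simp only [coe_Icc, Set.mem_Icc] at hy
    obtain ⟨p, hp, rfl⟩ := hbij.surjOn (show y ∈ Set.Icc 1 α.sum from ⟨hy.1, hy.2.trans hk⟩)
    exact ⟨p, by simpa using ⟨hp, hy.2⟩, rfl⟩

end StandardFillings

section RankFillings

variable {ι β : Type*} [DecidableEq ι] [LinearOrder β]

def rankFilling (s : Finset ι) (key : ι → β) (p : ι) : ℕ :=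
  if p ∈ s then #{q ∈ s | key q ≤ key p} else 0

lemma rankFilling_lt_rankFilling_iff {s : Finset ι} {key : ι → β} {p q : ι} (hp : p ∈ s)
    (hq : q ∈ s) : rankFilling s key p < rankFilling s key q ↔ key p < key q := by
  simp only [rankFilling, if_pos hp, if_pos hq]
  constructor
  · intro h
    by_contra! hqp
    refine h.not_ge (card_le_card fun x hx => ?_)
    simp only [mem_filter] at hx ⊢
    exact ⟨hx.1, hx.2.trans hqp⟩
  · intro h
    refine card_lt_card ⟨fun x hx => ?_, fun hsub => ?_⟩
    · simp only [mem_filter] at hx ⊢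
      exact ⟨hx.1, hx.2.trans h.le⟩
    · exact h.not_ge (mem_filter.mp (hsub (mem_filter.mpr ⟨hq, le_rfl⟩))).2

lemma bijOn_rankFilling {s : Finset ι} {key : ι → β} (hkey : Set.InjOn key s) :
    Set.BijOn (rankFilling s key) s (Set.Icc 1 #s) := by
  have hmaps : Set.MapsTo (rankFilling s key) s (Set.Icc 1 #s) := fun p hp => by
    rw [mem_coe] at hp
    simp only [rankFilling, if_pos hp, Set.mem_Icc]
    exact ⟨card_pos.mpr ⟨p, mem_filter.mpr ⟨hp, le_rfl⟩⟩, card_le_card (filter_subset _ _)⟩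
  have hinj : Set.InjOn (rankFilling s key) s := fun p hp q hq h =>
    hkey hp hq <| le_antisymm
      (not_lt.mp fun hlt => h.not_gt ((rankFilling_lt_rankFilling_iff hq hp).mpr hlt))
      (not_lt.mp fun hlt => h.not_lt ((rankFilling_lt_rankFilling_iff hp hq).mpr hlt))
  refine ⟨hmaps, hinj, ?_⟩
  rw [← coe_Icc]
  exact surjOn_of_injOn_of_card_le _ (by simpa using hmaps) hinj (by simp)

lemma isStandardFilling_rankFilling {α : List ℕ} {key : ℕ × ℕ → β}
    (hkey : Set.InjOn key (cd α)) : IsStandardFilling α (rankFilling (cd α) key) :=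
  ⟨card_cd α ▸ bijOn_rankFilling hkey, fun _ hp => if_neg hp⟩

end RankFillings

section SPIT

/-- Together with increasing rows, this is equivalent to the peak-tableau condition. -/
def ChainCond (α : List ℕ) (T : ℕ × ℕ → ℕ) : Prop :=
  ∀ j, 1 ≤ j → j + 1 ≤ α.length → T (2, j) < T (1, j + 1)

/-- The position of a box of the first two columns when these are read row by row,
from the bottom row up. -/
def spineIndex (p : ℕ × ℕ) : ℕ := 2 * (p.2 - 1) + p.1

variable {n : ℕ} {α : List ℕ} {T : ℕ × ℕ → ℕ}

lemma one_le_part (hα : IsComposition n α) {j : ℕ} (h1 : 1 ≤ j) (h2 : j ≤ α.length) :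
    1 ≤ part α j := by
  obtain ⟨i, rfl⟩ : ∃ i, j = i + 1 := ⟨j - 1, by omega⟩
  rw [part_succ (by omega)]
  exact hα.1 _ (List.getElem_mem _)

lemma two_le_part (hα : IsPeakComposition n α) {j : ℕ} (h1 : 1 ≤ j) (h2 : j < α.length) :
    2 ≤ part α j := by
  have := hα.2 (j - 1) (by omega)
  rw [part]
  omega

lemma RowsIncrease.lt (hR : RowsIncrease α T) {i i' j : ℕ} (hi : 1 ≤ i) (hii' : i < i')
    (h : (i', j) ∈ cd α) : T (i, j) < T (i', j) := by
  induction i', hii' using Nat.le_induction with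
  | base => exact hR i j (by rw [mk_mem_cd] at h ⊢; omega) h
  | succ m hm ih =>
    have hm' : (m, j) ∈ cd α := by rw [mk_mem_cd] at h ⊢; omega
    exact (ih hm').trans (hR m j hm' h)

lemma RowsIncrease.le (hR : RowsIncrease α T) {i i' j : ℕ} (hi : 1 ≤ i) (hii' : i ≤ i')
    (h : (i', j) ∈ cd α) : T (i, j) ≤ T (i', j) := by
  rcases hii'.eq_or_lt with rfl | hlt
  · exact le_rfl
  · exact (hR.lt hi hlt h).le

lemma lt_firstCol (hα : IsPeakComposition n α) (hR : RowsIncrease α T) (hch : ChainCond α T)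
    {i j m : ℕ} (hij : (i, j) ∈ cd α) (hi : i ≤ 2) (hjm : j < m) (hm : m ≤ α.length) :
    T (i, j) < T (1, m) := by
  have h2 : ∀ j', 1 ≤ j' → j' < α.length → (2, j') ∈ cd α := fun j' h1 h2 =>
    mem_cd.mpr ⟨by omega, h1, h2.le, two_le_part hα h1 h2⟩
  have hj := mem_cd.mp hij
  induction m, hjm using Nat.le_induction with
  | base => exact (hR.le hj.1 hi (h2 j hj.2.1 (by omega))).trans_lt (hch j hj.2.1 (by omega))
  | succ m hm ih =>
    have h2m := h2 m (by omega) (by omega)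
    exact ((ih (by omega)).trans (hR.lt le_rfl one_lt_two h2m)).trans (hch m (by omega) hm)

lemma lt_of_spineIndex_lt (hα : IsPeakComposition n α) (hR : RowsIncrease α T)
    (hch : ChainCond α T) {p q : ℕ × ℕ} (hp : p ∈ cd α) (hq : q ∈ cd α) (hp2 : p.1 ≤ 2)
    (hq2 : q.1 ≤ 2) (h : spineIndex p < spineIndex q) : T p < T q := by
  obtain ⟨a, b⟩ := p
  obtain ⟨c, d⟩ := q
  have hp' := mem_cd.mp hp
  have hq' := mem_cd.mp hq
  simp only [spineIndex] at hp2 hq2 hp' hq' h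
  obtain rfl | hbd : b = d ∨ b < d := by omega
  · exact hR.lt hp'.1 (by omega) hq
  · exact (lt_firstCol hα hR hch hp hp2 hbd hq'.2.2.1).trans_le (hR.le le_rfl hq'.1 hq)

lemma chainCond_of_peakCond (hα : IsPeakComposition n α) (hT : IsStandardFilling α T)
    (hP : PeakCond α T) : ChainCond α T := by
  intro j hj1 hj2
  have hb2 : (2, j) ∈ cd α := mem_cd.mpr ⟨by omega, hj1, by omega, two_le_part hα hj1 hj2⟩
  have hb1 : (1, j + 1) ∈ cd α :=
    mem_cd.mpr ⟨le_rfl, by omega, hj2, one_le_part hα.1 (by omega) hj2⟩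
  obtain ⟨hk1, hk2⟩ := hT.1.mapsTo hb1
  obtain ⟨β, hβ, hcd⟩ := hP (T (1, j + 1)) hk1 hk2
  have hb1β : (1, j + 1) ∈ cd β := by
    rw [← hcd]
    exact mem_filter.mpr ⟨hb1, le_rfl⟩
  have hlen : j + 1 ≤ β.length := (mk_mem_cd.mp hb1β).2.2.1
  have hb2β : (2, j) ∈ cd β :=
    mem_cd.mpr ⟨by omega, hj1, by omega, two_le_part hβ hj1 (by omega)⟩
  rw [← hcd, mem_filter] at hb2β
  refine hb2β.2.lt_of_ne fun he => ?_
  simpa using hT.1.injOn hb2 hb1 he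

lemma le_card_filter_Icc_iff {P : ℕ → Prop} [DecidablePred P] {L : ℕ}
    (hP : ∀ i j, 1 ≤ i → i ≤ j → j ≤ L → P j → P i) {i : ℕ} (hi : 1 ≤ i) (hiL : i ≤ L) :
    i ≤ #{x ∈ Icc 1 L | P x} ↔ P i := by
  constructor
  · intro h
    by_contra hPi
    have hsub : {x ∈ Icc 1 L | P x} ⊆ Icc 1 (i - 1) := fun x hx => by
      rw [mem_filter, mem_Icc] at hx
      have : x < i := by_contra fun hxi => hPi (hP i x hi (by omega) hx.1.2 hx.2)
      exact mem_Icc.mpr ⟨hx.1.1, by omega⟩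
    have := (card_le_card hsub).trans_eq (Nat.card_Icc 1 (i - 1))
    omega
  · intro hPi
    have hsub : Icc 1 i ⊆ {x ∈ Icc 1 L | P x} := fun x hx => by
      rw [mem_Icc] at hx
      exact mem_filter.mpr ⟨mem_Icc.mpr ⟨hx.1, hx.2.trans hiL⟩, hP x i hx.1 hx.2 hiL hPi⟩
    simpa using card_le_card hsub

def rowCount (α : List ℕ) (T : ℕ × ℕ → ℕ) (k j : ℕ) : ℕ := #{i ∈ Icc 1 (part α j) | T (i, j) ≤ k}

def colCount (α : List ℕ) (T : ℕ × ℕ → ℕ) (k : ℕ) : ℕ := #{j ∈ Icc 1 α.length | T (1, j) ≤ k}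

def shapeBelow (α : List ℕ) (T : ℕ × ℕ → ℕ) (k : ℕ) : List ℕ :=
  (List.range (colCount α T k)).map fun j => rowCount α T k (j + 1)

lemma le_rowCount_iff (hR : RowsIncrease α T) {k i j : ℕ} (hij : (i, j) ∈ cd α) :
    i ≤ rowCount α T k j ↔ T (i, j) ≤ k := by
  have h := mk_mem_cd.mp hij
  refine le_card_filter_Icc_iff (fun i' i'' h1 h2 h3 hle => ?_) h.1 h.2.2.2
  exact (hR.le h1 h2 (mk_mem_cd.mpr ⟨by omega, h.2.1, h.2.2.1, h3⟩)).trans hle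

lemma le_colCount_iff (hα : IsPeakComposition n α) (hR : RowsIncrease α T)
    (hch : ChainCond α T) {k j : ℕ} (h1 : 1 ≤ j) (h2 : j ≤ α.length) :
    j ≤ colCount α T k ↔ T (1, j) ≤ k := by
  refine le_card_filter_Icc_iff (fun j' j'' h1' h2' h3' hle => ?_) h1 h2
  have hj' : (1, j') ∈ cd α :=
    mk_mem_cd.mpr ⟨le_rfl, h1', by omega, one_le_part hα.1 h1' (by omega)⟩
  rcases h2'.eq_or_lt with rfl | hlt
  · exact hle
  · exact ((lt_firstCol hα hR hch hj' one_le_two hlt h3').trans_le hle).le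

lemma colCount_le (α : List ℕ) (T : ℕ × ℕ → ℕ) (k : ℕ) : colCount α T k ≤ α.length :=
  (card_filter_le _ _).trans_eq (by simp)

lemma cd_shapeBelow (hα : IsPeakComposition n α) (hR : RowsIncrease α T) (hch : ChainCond α T)
    (k : ℕ) : cd (shapeBelow α T k) = {p ∈ cd α | T p ≤ k} := by
  have hm := colCount_le α T k
  ext ⟨i, j⟩
  rw [shapeBelow, mk_mem_cd_map_range, mem_filter]
  constructor
  · rintro ⟨h1, h2, h3, h4⟩
    have hij : (i, j) ∈ cd α :=
      mk_mem_cd.mpr ⟨h1, h2, by omega, h4.trans ((card_filter_le _ _).trans_eq (by simp))⟩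
    exact ⟨hij, (le_rowCount_iff hR hij).mp h4⟩
  · rintro ⟨hij, hTk⟩
    have h := mk_mem_cd.mp hij
    have h1j : (1, j) ∈ cd α := mk_mem_cd.mpr ⟨le_rfl, h.2.1, h.2.2.1, by omega⟩
    exact ⟨h.1, h.2.1, (le_colCount_iff hα hR hch h.2.1 h.2.2.1).mpr
      ((hR.le le_rfl h.1 hij).trans hTk), (le_rowCount_iff hR hij).mpr hTk⟩

lemma peakCond_of_chainCond (hα : IsPeakComposition n α) (hT : IsStandardFilling α T)
    (hR : RowsIncrease α T) (hch : ChainCond α T) : PeakCond α T := by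
  intro k hk1 hk
  have hm := colCount_le α T k
  refine ⟨shapeBelow α T k, ⟨⟨fun a ha => ?_, ?_⟩, fun i hi => ?_⟩,
    (cd_shapeBelow hα hR hch k).symm⟩
  · obtain ⟨j, hj, rfl⟩ := List.mem_map.mp ha
    rw [List.mem_range] at hj
    have hbox : (1, j + 1) ∈ cd α :=
      mk_mem_cd.mpr ⟨le_rfl, by omega, by omega, one_le_part hα.1 (by omega) (by omega)⟩
    exact (le_rowCount_iff hR hbox).mpr ((le_colCount_iff hα hR hch (by omega) (by omega)).mp hj)
  · rw [← card_cd, cd_shapeBelow hα hR hch, card_filter_le_of_isStandardFilling hT hk]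
  · simp only [shapeBelow, List.length_map, List.length_range] at hi
    have hbox : (2, i + 1) ∈ cd α :=
      mk_mem_cd.mpr ⟨by omega, by omega, by omega, two_le_part hα (by omega) (by omega)⟩
    have hTk := (hch (i + 1) (by omega) (by omega)).trans_le
      ((le_colCount_iff hα hR hch (by omega) (by omega)).mp hi)
    simpa [shapeBelow, show i < colCount α T k by omega, Nat.lt_iff_add_one_le] using
      (le_rowCount_iff hR hbox).mpr hTk.le

lemma isSPIT_iff (hα : IsPeakComposition n α) :
    IsSPIT α T ↔ IsStandardFilling α T ∧ RowsIncrease α T ∧ ChainCond α T := by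
  constructor
  · rintro ⟨⟨hT, hR, -⟩, hP⟩
    exact ⟨hT, hR, chainCond_of_peakCond hα hT hP⟩
  · rintro ⟨hT, hR, hch⟩
    refine ⟨⟨hT, hR, fun j h1 h2 => ?_⟩, peakCond_of_chainCond hα hT hR hch⟩
    exact lt_firstCol hα hR hch h1 one_le_two (lt_add_one j) (mk_mem_cd.mp h2).2.2.1

end SPIT

section Greedy

/-- The boxes of the first two columns in `spineIndex` order, with the boxes of row `r` beyond
column 2 inserted right after `(2, r)`; then all remaining boxes in column reading order. -/
def greedyKey (α : List ℕ) (r : ℕ) (p : ℕ × ℕ) : ℕ ×ₗ ℕ :=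
  if p.1 ≤ 2 then toLex (spineIndex p, 0)
  else if p.2 = r then toLex (2 * r, p.1)
  else toLex (2 * α.length + p.1, p.2)

def greedy (α : List ℕ) (r : ℕ) : ℕ × ℕ → ℕ := rankFilling (cd α) (greedyKey α r)

variable {n : ℕ} {α : List ℕ} {r : ℕ}

lemma greedy_lt_greedy_iff {p q : ℕ × ℕ} (hp : p ∈ cd α) (hq : q ∈ cd α) :
    greedy α r p < greedy α r q ↔ greedyKey α r p < greedyKey α r q :=
  rankFilling_lt_rankFilling_iff hp hq

lemma greedyKey_injOn : Set.InjOn (greedyKey α r) (cd α) := by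
  rintro ⟨a, b⟩ hp ⟨c, d⟩ hq h
  have hp' := mk_mem_cd.mp hp
  have hq' := mk_mem_cd.mp hq
  simp only [greedyKey, spineIndex] at h
  split_ifs at h <;> simp only [EmbeddingLike.apply_eq_iff_eq, Prod.mk.injEq] at h ⊢ <;> omega

lemma isSPIT_greedy (hα : IsPeakComposition n α) (r : ℕ) : IsSPIT α (greedy α r) := by
  refine (isSPIT_iff hα).mpr ⟨isStandardFilling_rankFilling greedyKey_injOn, ?_, ?_⟩
  · intro i j h1 h2
    have h := mk_mem_cd.mp h2
    rw [greedy_lt_greedy_iff h1 h2]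
    simp only [greedyKey, spineIndex]
    split_ifs <;> simp only [Prod.Lex.toLex_lt_toLex, true_and] <;> omega
  · intro j hj1 hj2
    have h1 : (2, j) ∈ cd α := mk_mem_cd.mpr ⟨by omega, hj1, by omega, two_le_part hα hj1 hj2⟩
    have h2 : (1, j + 1) ∈ cd α :=
      mk_mem_cd.mpr ⟨le_rfl, by omega, hj2, one_le_part hα.1 (by omega) hj2⟩
    rw [greedy_lt_greedy_iff h1 h2]
    simp only [greedyKey, spineIndex]
    split_ifs <;> simp only [Prod.Lex.toLex_lt_toLex, true_and] <;> omega

end Greedy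

section Interval

variable {n : ℕ} {α : List ℕ} {T : ℕ × ℕ → ℕ}

lemma isPermWord_wC (hα : IsComposition n α) (hT : IsStandardFilling α T) :
    IsPermWord n (wC α T) :=
  hα.2 ▸ (isStandardFilling_iff_isPermWord hT.2).mp hT

lemma invW_wC_greedy_zero_subset (hα : IsPeakComposition n α) (hT : IsSPIT α T) :
    InvW (wC α (greedy α 0)) ⊆ InvW (wC α T) := by
  obtain ⟨-, hR, hch⟩ := (isSPIT_iff hα).mp hT
  rw [invW_wC_subset_iff]
  rintro ⟨a, b⟩ hp ⟨c, d⟩ hq hpq hG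
  have hp' := mk_mem_cd.mp hp
  have hq' := mk_mem_cd.mp hq
  rw [greedy_lt_greedy_iff hq hp] at hG
  rw [Prod.Lex.toLex_lt_toLex] at hpq
  simp only [greedyKey] at hG
  by_cases hc : c ≤ 2
  · have ha : a ≤ 2 := by omega
    rw [if_pos hc, if_pos ha, Prod.Lex.toLex_lt_toLex] at hG
    exact lt_of_spineIndex_lt hα hR hch hq hp hc ha (by omega)
  · exfalso
    split_ifs at hG <;> simp only [Prod.Lex.toLex_lt_toLex, spineIndex] at hG <;> omega

lemma invW_wC_subset_greedy (hα : IsPeakComposition n α) {R : ℕ}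
    (hlong : ∀ j, (3, j) ∈ cd α → j = R) (hT : IsSPIT α T) :
    InvW (wC α T) ⊆ InvW (wC α (greedy α R)) := by
  obtain ⟨-, hrows, hch⟩ := (isSPIT_iff hα).mp hT
  rw [invW_wC_subset_iff]
  rintro ⟨a, b⟩ hp ⟨c, d⟩ hq hpq hqp
  have hp' := mk_mem_cd.mp hp
  have hq' := mk_mem_cd.mp hq
  rw [greedy_lt_greedy_iff hq hp]
  rw [Prod.Lex.toLex_lt_toLex] at hpq
  simp only [greedyKey]
  by_cases ha : a ≤ 2 <;> by_cases hc : c ≤ 2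
  · rw [if_pos hc, if_pos ha, Prod.Lex.toLex_lt_toLex]
    refine Or.inl (lt_of_not_ge fun hle => ?_)
    rcases hle.lt_or_eq with hlt | heq
    · exact lt_asymm hqp (lt_of_spineIndex_lt hα hrows hch hp hq ha hc hlt)
    · obtain ⟨rfl, rfl⟩ : a = c ∧ b = d := by simp only [spineIndex] at heq; omega
      exact lt_irrefl _ hqp
  · have hd : d = R := hlong d (mk_mem_cd.mpr ⟨by omega, hq'.2.1, hq'.2.2.1, by omega⟩)
    rw [if_neg hc, if_pos hd, if_pos ha, Prod.Lex.toLex_lt_toLex]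
    -- otherwise `T p ≤ T (2, R) < T q`
    refine Or.inl (lt_of_not_ge fun hle => lt_asymm hqp ?_)
    have h2d : (2, d) ∈ cd α := mk_mem_cd.mpr ⟨by omega, hq'.2.1, hq'.2.2.1, by omega⟩
    have hle' : T (a, b) ≤ T (2, d) := by
      rcases hle.lt_or_eq with hlt | heq
      · refine (lt_of_spineIndex_lt hα hrows hch hp h2d ha le_rfl ?_).le
        simp only [spineIndex] at hlt ⊢
        omega
      · obtain ⟨rfl, rfl⟩ : a = 2 ∧ b = d := by simp only [spineIndex] at heq; omega
        exact le_rfl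
    exact hle'.trans_lt (hrows.lt (by omega) (by omega) hq)
  · omega
  · obtain rfl : b = d := (hlong b (mk_mem_cd.mpr ⟨by omega, hp'.2.1, hp'.2.2.1, by omega⟩)).trans
      (hlong d (mk_mem_cd.mpr ⟨by omega, hq'.2.1, hq'.2.2.1, by omega⟩)).symm
    exact absurd (hrows.lt hp'.1 (by omega) hq) (lt_asymm hqp)

lemma isSPIT_of_invW_subset (hα : IsPeakComposition n α) (hT : IsStandardFilling α T) {r : ℕ}
    (hlow : InvW (wC α (greedy α 0)) ⊆ InvW (wC α T))
    (hup : InvW (wC α T) ⊆ InvW (wC α (greedy α r))) : IsSPIT α T := by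
  refine (isSPIT_iff hα).mpr ⟨hT, fun i j h1 h2 => ?_, fun j hj1 hj2 => ?_⟩
  · refine lt_of_le_of_ne (not_lt.mp fun h => ?_) fun he => by simpa using hT.1.injOn h1 h2 he
    have := invW_wC_subset_iff.mp hup _ h1 _ h2
      (Prod.Lex.toLex_lt_toLex.mpr (Or.inl (lt_add_one i))) h
    exact lt_asymm this (((isSPIT_iff hα).mp (isSPIT_greedy hα r)).2.1 i j h1 h2)
  · have h1 : (2, j) ∈ cd α := mk_mem_cd.mpr ⟨by omega, hj1, by omega, two_le_part hα hj1 hj2⟩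
    have h2 : (1, j + 1) ∈ cd α :=
      mk_mem_cd.mpr ⟨le_rfl, by omega, hj2, one_le_part hα.1 (by omega) hj2⟩
    exact invW_wC_subset_iff.mp hlow _ h2 _ h1 (Prod.Lex.toLex_lt_toLex.mpr (Or.inl one_lt_two))
      (((isSPIT_iff hα).mp (isSPIT_greedy hα 0)).2.2 j hj1 hj2)

theorem RWc_eq_interval (hα : IsPeakComposition n α) {R : ℕ}
    (hlong : ∀ j, (3, j) ∈ cd α → j = R) :
    RWc α = {w | IsPermWord n w ∧ InvW (wC α (greedy α 0)) ⊆ InvW w ∧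
      InvW w ⊆ InvW (wC α (greedy α R))} := by
  ext w
  constructor
  · rintro ⟨T, hT, rfl⟩
    exact ⟨isPermWord_wC hα.1 hT.1.1, invW_wC_greedy_zero_subset hα hT,
      invW_wC_subset_greedy hα hlong hT⟩
  · rintro ⟨hw, hlow, hup⟩
    rw [← hα.1.2] at hw
    have hwT := wC_ofWord hw.length_eq
    rw [← hwT] at hlow hup
    exact ⟨ofWord α w, isSPIT_of_invW_subset hα (isStandardFilling_ofWord hw) hlow hup, hwT.symm⟩

lemma not_exists_greatest_RWc (hα : IsPeakComposition n α) {r r' : ℕ} (hrr' : r < r')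
    (hr : (3, r) ∈ cd α) (hr' : (3, r') ∈ cd α) :
    ¬ ∃ ρ ∈ RWc α, ∀ w ∈ RWc α, InvW w ⊆ InvW ρ := by
  rintro ⟨_, ⟨T, hT, rfl⟩, hmax⟩
  obtain ⟨-, hR, hch⟩ := (isSPIT_iff hα).mp hT
  have h := mk_mem_cd.mp hr
  have h' := mk_mem_cd.mp hr'
  have hz : (1, r + 1) ∈ cd α :=
    mk_mem_cd.mpr ⟨le_rfl, by omega, by omega, one_le_part hα.1 (by omega) (by omega)⟩
  have h2 : (2, r') ∈ cd α := mk_mem_cd.mpr ⟨by omega, by omega, by omega, by omega⟩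
  have hbelow : ∀ s, InvW (wC α (greedy α s)) ⊆ InvW (wC α T) :=
    fun s => hmax _ ⟨greedy α s, isSPIT_greedy hα s, rfl⟩
  have e1 : T (3, r') < T (3, r) := by
    refine invW_wC_subset_iff.mp (hbelow r') _ hr _ hr'
      (Prod.Lex.toLex_lt_toLex.mpr (Or.inr ⟨rfl, hrr'⟩)) ?_
    rw [greedy_lt_greedy_iff hr' hr]
    simp only [greedyKey]
    split_ifs <;> simp only [Prod.Lex.toLex_lt_toLex] <;> omega
  have e2 : T (3, r) < T (1, r + 1) := by
    refine invW_wC_subset_iff.mp (hbelow r) _ hz _ hr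
      (Prod.Lex.toLex_lt_toLex.mpr (Or.inl (by omega))) ?_
    rw [greedy_lt_greedy_iff hr hz]
    simp only [greedyKey, spineIndex]
    split_ifs <;> simp only [Prod.Lex.toLex_lt_toLex] <;> omega
  have e3 : T (1, r + 1) < T (2, r') :=
    lt_of_spineIndex_lt hα hR hch hz h2 one_le_two le_rfl (by simp only [spineIndex]; omega)
  have e4 : T (2, r') < T (3, r') := hR.lt (by omega) (by omega) hr'
  omega

end Interval

/-- For a peak composition `α` of `n`, the set of column reading words of
SPITs of shape `α` is a left weak Bruhat interval in `S_n` iff `α` has at most one part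
greater than `2`. -/
theorem RWc_interval_iff (n : ℕ) (α : List ℕ) (hα : IsPeakComposition n α) :
    (∃ σ ρ : List ℕ, IsPermWord n σ ∧ IsPermWord n ρ ∧ InvW σ ⊆ InvW ρ ∧
        RWc α = {w : List ℕ | IsPermWord n w ∧ InvW σ ⊆ InvW w ∧ InvW w ⊆ InvW ρ}) ↔
      α.countP (fun a => decide (2 < a)) ≤ 1 := by
  rw [countP_two_lt_le_one_iff]
  constructor
  · rintro ⟨σ, ρ, -, hρ, hσρ, heq⟩ j j' hj hj'
    have hgreatest : ∃ ρ ∈ RWc α, ∀ w ∈ RWc α, InvW w ⊆ InvW ρ := by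
      refine ⟨ρ, ?_, fun w hw => ?_⟩
      · rw [heq]
        exact ⟨hρ, hσρ, subset_rfl⟩
      · rw [heq] at hw
        exact hw.2.2
    by_contra hne
    rcases lt_or_gt_of_ne hne with hlt | hlt
    · exact not_exists_greatest_RWc hα hlt hj hj' hgreatest
    · exact not_exists_greatest_RWc hα hlt hj' hj hgreatest
  · intro h
    obtain ⟨R, hR⟩ : ∃ R, ∀ j, (3, j) ∈ cd α → j = R := by
      by_cases hex : ∃ R, (3, R) ∈ cd α
      · obtain ⟨R, hR⟩ := hex
        exact ⟨R, fun j hj => h j R hj hR⟩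
      · exact ⟨0, fun j hj => absurd ⟨j, hj⟩ hex⟩
    have hG := isSPIT_greedy hα
    exact ⟨_, _, isPermWord_wC hα.1 (hG 0).1.1, isPermWord_wC hα.1 (hG R).1.1,
      invW_wC_greedy_zero_subset hα (hG R), RWc_eq_interval hα hR⟩

end PaperSPIT
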